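/- arXiv:2408.11708 — 3 statements merged into one kernel-verified Lean document; each statement's English description precedes it below -/
import Mathlib

section
/- Let A = {a_1, ..., a_n} ⊂ (0,1) be a finite set of reals, let λ_1, ..., λ_m be positive reals, and let Θ = ⋃_{j=1}^m λ_j A_j where each A_j is a subset of A^{Z_+} (the set of all products ∏ a_i^{k_i} with k_i nonnegative integers, including the empty product 1). Then for every θ ∈ Θ, every common ratio r ∈ (0,1) such that some geometric sequence {θ' r^k}_{k=0}^∞ is contained in Θ and contains θ, satisfies r ∈ A^{Q_+*}, i.e., r = ∏ a_i^{q_i} for some nonnegative rationals q_i, not all zero. -/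
/-- `A^{Z_+^*}`: products of elements of `A` with nonnegative integer exponents, not all zero. -/
def ZProdStar (A : Finset ℝ) : Set ℝ :=
  {y | ∃ m : ℝ → ℕ, (∃ a ∈ A, m a ≠ 0) ∧ y = ∏ a ∈ A, a ^ m a}

/-- `A^{Z_+} = {1} ∪ A^{Z_+^*}`. -/
def ZProd (A : Finset ℝ) : Set ℝ := {1} ∪ ZProdStar A

/-- `A^{Q_+^*}`: products with nonnegative rational exponents, not all zero. -/
def QProdStar (A : Finset ℝ) : Set ℝ :=
  {y | ∃ q : ℝ → ℚ, (∀ a ∈ A, 0 ≤ q a) ∧ (∃ a ∈ A, q a ≠ 0) ∧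
    y = ∏ a ∈ A, a ^ ((q a : ℝ))}

/-- `R_Θ(θ)`: common ratios of geometric sequences contained in `Θ` passing through `θ`. -/
def RSet (Θ : Set ℝ) (θ : ℝ) : Set ℝ :=
  {r | 0 < r ∧ r < 1 ∧ ∃ θ' ∈ Θ, (∃ k : ℕ, θ = θ' * r ^ k) ∧
    ∀ k : ℕ, θ' * r ^ k ∈ Θ}

/-!
Write the terms of the geometric sequence as `θ' r^k = λ_{J k} ∏ a^{M k a}`. By Dickson's lemma
and the pigeonhole principle there are `k < l` with `J k = J l` and `M k ≤ M l` coordinatewise.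
Dividing the two terms gives `r^(l-k) = ∏ a^(M l a - M k a)`, and taking `(l-k)`-th roots
exhibits `r` as a product of rational powers; the exponents are not all zero since `r ≠ 1`.
-/

open Finset

lemma Finset.prod_pow_eq_prod_pow_mul_prod_pow_sub {ι M : Type*} [CommMonoid M]
    (s : Finset ι) (f : ι → M) {m n : ι → ℕ} (h : ∀ i ∈ s, m i ≤ n i) :
    ∏ i ∈ s, f i ^ n i = (∏ i ∈ s, f i ^ m i) * ∏ i ∈ s, f i ^ (n i - m i) := by
  rw [← prod_mul_distrib]
  exact prod_congr rfl fun i hi => by rw [← pow_add, Nat.add_sub_cancel' (h i hi)]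

lemma eq_mul_pow_sub_of_mul_eq_mul_pow {K : Type*} [Field K] {c x y θ r : K} {k l : ℕ}
    (hc : c ≠ 0) (hkl : k ≤ l) (hx : c * x = θ * r ^ k) (hy : c * y = θ * r ^ l) :
    y = x * r ^ (l - k) := by
  apply mul_left_cancel₀ hc
  rw [hy, ← mul_assoc, hx, mul_assoc, ← pow_add, Nat.add_sub_cancel' hkl]

lemma exists_lt_eq_and_le {α β : Type*} [Preorder α] [WellQuasiOrderedLE α] [Finite β]
    (J : ℕ → β) (f : ℕ → α) : ∃ k l, k < l ∧ J k = J l ∧ f k ≤ f l :=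
  (Finite.wellQuasiOrdered (· = ·)).prod wellQuasiOrdered_le fun k => (J k, f k)

lemma exists_eq_prod_pow_of_mem_ZProd {A : Finset ℝ} {x : ℝ} (hx : x ∈ ZProd A) :
    ∃ M : ℝ → ℕ, x = ∏ a ∈ A, a ^ M a := by
  rcases hx with rfl | ⟨M, -, hM⟩
  · exact ⟨fun _ => 0, by simp⟩
  · exact ⟨M, hM⟩

lemma exists_mul_prod_pow_eq_of_mem_iUnion {A : Finset ℝ} {m : ℕ} {lam : Fin m → ℝ}
    {Aj : Fin m → Set ℝ} (hAj : ∀ j, Aj j ⊆ ZProd A) {x : ℝ}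
    (hx : x ∈ ⋃ j, (fun x => lam j * x) '' Aj j) :
    ∃ (j : Fin m) (M : ℝ → ℕ), lam j * ∏ a ∈ A, a ^ M a = x := by
  obtain ⟨j, y, hy, rfl⟩ := Set.mem_iUnion.1 hx
  obtain ⟨M, rfl⟩ := exists_eq_prod_pow_of_mem_ZProd (hAj j hy)
  exact ⟨j, M, rfl⟩

lemma mem_QProdStar_of_pow_eq_prod_pow {A : Finset ℝ} (hA : ∀ a ∈ A, 0 ≤ a) {r : ℝ}
    (hr0 : 0 ≤ r) (hr1 : r ≠ 1) {d : ℕ} (hd : d ≠ 0) {D : ℝ → ℕ}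
    (hrD : r ^ d = ∏ a ∈ A, a ^ D a) : r ∈ QProdStar A := by
  refine ⟨fun a => (D a : ℚ) / d, fun a _ => by positivity, ?_, ?_⟩
  · by_contra! hzero
    have hD : ∀ a ∈ A, D a = 0 := fun a ha => by
      simpa [hd] using hzero a ha
    apply hr1
    rw [← pow_eq_one_iff_of_nonneg hr0 hd, hrD]
    exact prod_eq_one fun a ha => by rw [hD a ha, pow_zero]
  · calc r = (r ^ d) ^ (d : ℝ)⁻¹ := (Real.pow_rpow_inv_natCast hr0 hd).symm
      _ = ∏ a ∈ A, (a ^ D a) ^ (d : ℝ)⁻¹ := by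
        rw [hrD, Real.finsetProd_rpow _ _ fun a ha => pow_nonneg (hA a ha) _]
      _ = ∏ a ∈ A, a ^ (((D a : ℚ) / d : ℚ) : ℝ) := prod_congr rfl fun a ha => by
        rw [← Real.rpow_natCast, ← Real.rpow_mul (hA a ha)]
        push_cast
        ring_nf

theorem stmt0 (A : Finset ℝ) (hA : ∀ a ∈ A, a ∈ Set.Ioo (0:ℝ) 1)
    (m : ℕ) (lam : Fin m → ℝ) (hlam : ∀ j, 0 < lam j)
    (Aj : Fin m → Set ℝ) (hAj : ∀ j, Aj j ⊆ ZProd A)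
    (Θ : Set ℝ) (hΘ : Θ = ⋃ j, (fun x => lam j * x) '' Aj j) :
    ∀ θ ∈ Θ, RSet Θ θ ⊆ QProdStar A := by
  subst hΘ
  rintro θ - r ⟨hr0, hr1, θ', -, -, hseq⟩
  choose J M hJM using fun k => exists_mul_prod_pow_eq_of_mem_iUnion hAj (hseq k)
  obtain ⟨k, l, hkl, hJ, hM⟩ := exists_lt_eq_and_le J fun k (a : A) => M k a
  have hMle : ∀ a ∈ A, M k a ≤ M l a := fun a ha => hM ⟨a, ha⟩
  have hPk : ∏ a ∈ A, a ^ M k a ≠ 0 :=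
    prod_ne_zero_iff.2 fun a ha => pow_ne_zero _ (hA a ha).1.ne'
  have hratio : ∏ a ∈ A, a ^ M l a = (∏ a ∈ A, a ^ M k a) * r ^ (l - k) :=
    eq_mul_pow_sub_of_mul_eq_mul_pow (hlam (J k)).ne' hkl.le (hJM k) (hJ ▸ hJM l)
  rw [prod_pow_eq_prod_pow_mul_prod_pow_sub A (fun a => a) hMle, mul_right_inj' hPk] at hratio
  exact mem_QProdStar_of_pow_eq_prod_pow (fun a ha => (hA a ha).1.le) hr0.le hr1.ne
    (Nat.sub_ne_zero_of_lt hkl) hratio.symm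
end

section
/- Let X ⊂ (0,1) and Λ ⊂ (0,∞) be finite sets, and let Θ = Λ X^{Z_+} = {λ x : λ ∈ Λ, x ∈ X^{Z_+}}. Then for every θ ∈ Θ one has X^{Z_+*} ⊆ R_Θ(θ) ⊆ X^{Q_+*}; that is, every element of X^{Z_+*} is the common ratio of some geometric sequence in Θ containing θ, and every common ratio of a geometric sequence in Θ containing θ lies in X^{Q_+*}. -/
/-
ZProd X is the multiplicative monoid generated by X, so every θ·rᵏ with
r ∈ ZProdStar X stays in Θ = Λ·ZProd X. Conversely, if θ'·rᵏ = λₖ·∏ a ^ mₖ(a) for all k, then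
pigeonhole on the finite set Λ together with Dickson's lemma on the exponent vectors mₖ give
k₁ < k₂ with λₖ₁ = λₖ₂ and mₖ₁ ≤ mₖ₂; hence r ^ (k₂ - k₁) = ∏ a ^ (mₖ₂(a) - mₖ₁(a)), and r is the
(k₂ - k₁)-th root of this product.
-/

theorem exists_lt_eq_and_le_of_finite {α β : Type*} [Finite α] [Preorder β]
    [WellQuasiOrderedLE β] (c : ℕ → α) (f : ℕ → β) :
    ∃ i j, i < j ∧ c i = c j ∧ f i ≤ f j :=
  ((Finite.wellQuasiOrdered (· = ·)).prod wellQuasiOrdered_le) fun k => (c k, f k)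

theorem Finset.prod_pow_eq_mul_prod_pow_sub {M : Type*} [CommMonoid M] {s : Finset M}
    {m n : M → ℕ} (h : ∀ a ∈ s, m a ≤ n a) :
    ∏ a ∈ s, a ^ n a = (∏ a ∈ s, a ^ m a) * ∏ a ∈ s, a ^ (n a - m a) := by
  rw [← Finset.prod_mul_distrib]
  exact Finset.prod_congr rfl fun a ha => by rw [← pow_add, Nat.add_sub_cancel' (h a ha)]

section ZProd

variable {X : Finset ℝ}

theorem mem_ZProd_iff {p : ℝ} : p ∈ ZProd X ↔ ∃ m : ℝ → ℕ, p = ∏ a ∈ X, a ^ m a := by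
  refine ⟨?_, fun ⟨m, hm⟩ => ?_⟩
  · rintro (rfl | ⟨m, -, hm⟩)
    exacts [⟨0, by simp⟩, ⟨m, hm⟩]
  · by_cases h : ∀ a ∈ X, m a = 0
    · exact Or.inl (hm.trans (Finset.prod_eq_one fun a ha => by rw [h a ha, pow_zero]))
    · exact Or.inr ⟨m, by simpa using h, hm⟩

theorem ZProdStar_subset_ZProd : ZProdStar X ⊆ ZProd X :=
  Set.subset_union_right

theorem mul_mem_ZProd {p q : ℝ} (hp : p ∈ ZProd X) (hq : q ∈ ZProd X) : p * q ∈ ZProd X := by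
  obtain ⟨m, rfl⟩ := mem_ZProd_iff.1 hp
  obtain ⟨n, rfl⟩ := mem_ZProd_iff.1 hq
  exact mem_ZProd_iff.2 ⟨m + n, by simp only [Pi.add_apply, pow_add, Finset.prod_mul_distrib]⟩

theorem pow_mem_ZProd {p : ℝ} (hp : p ∈ ZProd X) (k : ℕ) : p ^ k ∈ ZProd X := by
  induction k with
  | zero => exact Or.inl (pow_zero p)
  | succ k ih => exact pow_succ p k ▸ mul_mem_ZProd ih hp

theorem pos_of_mem_ZProd (hX : ∀ x ∈ X, 0 < x) {p : ℝ} (hp : p ∈ ZProd X) : 0 < p := by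
  obtain ⟨m, rfl⟩ := mem_ZProd_iff.1 hp
  exact Finset.prod_pos fun a ha => pow_pos (hX a ha) _

theorem lt_one_of_mem_ZProdStar (hX : ∀ x ∈ X, x ∈ Set.Ico (0 : ℝ) 1) {r : ℝ}
    (hr : r ∈ ZProdStar X) : r < 1 := by
  obtain ⟨m, ⟨b, hb, hmb⟩, rfl⟩ := hr
  rw [← Finset.mul_prod_erase X (fun a => a ^ m a) hb]
  have hrest : ∏ a ∈ X.erase b, a ^ m a ≤ 1 := Finset.prod_le_one
    (fun a ha => pow_nonneg (hX a (Finset.mem_of_mem_erase ha)).1 _)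
    (fun a ha => pow_le_one₀ (hX a (Finset.mem_of_mem_erase ha)).1
      (hX a (Finset.mem_of_mem_erase ha)).2.le)
  calc b ^ m b * ∏ a ∈ X.erase b, a ^ m a ≤ b ^ m b :=
        mul_le_of_le_one_right (pow_nonneg (hX b hb).1 _) hrest
    _ < 1 := pow_lt_one₀ (hX b hb).1 (hX b hb).2 hmb

theorem mem_QProdStar_of_pow_mem_ZProd (hX : ∀ x ∈ X, 0 < x) {r : ℝ} (hr0 : 0 < r)
    (hr1 : r < 1) {d : ℕ} (hd : 0 < d) (hrd : r ^ d ∈ ZProd X) : r ∈ QProdStar X := by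
  obtain ⟨m, hm⟩ := mem_ZProd_iff.1 hrd
  refine ⟨fun a => (m a : ℚ) / d, fun a _ => by positivity, ?_, ?_⟩
  · by_contra! hzero
    have hm0 : ∀ a ∈ X, m a = 0 := fun a ha => by
      simpa [hd.ne'] using hzero a ha
    have : r ^ d = 1 := hm.trans (Finset.prod_eq_one fun a ha => by rw [hm0 a ha, pow_zero])
    exact (pow_lt_one₀ hr0.le hr1 hd.ne').ne this
  · rw [← Real.pow_rpow_inv_natCast hr0.le hd.ne', hm,
      ← Real.finsetProd_rpow X _ fun a ha => (pow_pos (hX a ha) _).le]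
    refine Finset.prod_congr rfl fun a ha => ?_
    rw [← Real.rpow_natCast, ← Real.rpow_mul (hX a ha).le]
    push_cast
    ring_nf

theorem exists_pow_mem_ZProd_of_geometric (hX : ∀ x ∈ X, 0 < x) {Λ : Finset ℝ}
    (hΛ : ∀ l ∈ Λ, l ≠ 0) {θ' r : ℝ}
    (hgeom : ∀ k : ℕ, θ' * r ^ k ∈ Set.image2 (· * ·) (↑Λ : Set ℝ) (ZProd X)) :
    ∃ d : ℕ, 0 < d ∧ r ^ d ∈ ZProd X := by
  choose l hl p hp hlp using hgeom
  simp only at hlp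
  choose m hm using fun k => mem_ZProd_iff.1 (hp k)
  obtain ⟨i, j, hij, hlij, hmij⟩ := exists_lt_eq_and_le_of_finite
    (fun k => (⟨l k, hl k⟩ : Λ)) (fun k (a : X) => m k a)
  rw [Subtype.mk.injEq] at hlij
  refine ⟨j - i, Nat.sub_pos_of_lt hij, mem_ZProd_iff.2 ⟨fun a => m j a - m i a, ?_⟩⟩
  have hpj : p j = p i * r ^ (j - i) := by
    apply mul_left_cancel₀ (hΛ _ (hl i))
    rw [← mul_assoc, hlp i, mul_assoc, ← pow_add, Nat.add_sub_cancel' hij.le, hlij, hlp j]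
  rw [hm i, hm j, Finset.prod_pow_eq_mul_prod_pow_sub fun a ha => hmij ⟨a, ha⟩] at hpj
  exact (mul_left_cancel₀ (pos_of_mem_ZProd hX (hm i ▸ hp i)).ne' hpj).symm

theorem mul_mem_image2_mul_ZProd {Λ : Set ℝ} {t p : ℝ}
    (ht : t ∈ Set.image2 (· * ·) Λ (ZProd X)) (hp : p ∈ ZProd X) :
    t * p ∈ Set.image2 (· * ·) Λ (ZProd X) := by
  obtain ⟨l, hl, q, hq, rfl⟩ := ht
  exact ⟨l, hl, q * p, mul_mem_ZProd hq hp, (mul_assoc l q p).symm⟩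

theorem ZProdStar_subset_RSet (hX : ∀ x ∈ X, x ∈ Set.Ioo (0 : ℝ) 1) {Θ : Set ℝ}
    (hΘ : ∀ t ∈ Θ, ∀ p ∈ ZProd X, t * p ∈ Θ) {θ : ℝ} (hθ : θ ∈ Θ) :
    ZProdStar X ⊆ RSet Θ θ := fun r hr =>
  ⟨pos_of_mem_ZProd (fun x hx => (hX x hx).1) (ZProdStar_subset_ZProd hr),
    lt_one_of_mem_ZProdStar (fun x hx => Set.Ioo_subset_Ico_self (hX x hx)) hr,
    θ, hθ, ⟨0, by simp⟩, fun k => hΘ θ hθ _ (pow_mem_ZProd (ZProdStar_subset_ZProd hr) k)⟩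

theorem RSet_subset_QProdStar (hX : ∀ x ∈ X, 0 < x) {Λ : Finset ℝ} (hΛ : ∀ l ∈ Λ, l ≠ 0)
    (θ : ℝ) : RSet (Set.image2 (· * ·) (↑Λ : Set ℝ) (ZProd X)) θ ⊆ QProdStar X := by
  rintro r ⟨hr0, hr1, θ', -, -, hgeom⟩
  obtain ⟨d, hd, hrd⟩ := exists_pow_mem_ZProd_of_geometric hX hΛ hgeom
  exact mem_QProdStar_of_pow_mem_ZProd hX hr0 hr1 hd hrd

end ZProd

theorem stmt1 (X Λ : Finset ℝ) (hX : ∀ x ∈ X, x ∈ Set.Ioo (0:ℝ) 1)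
    (hΛ : ∀ l ∈ Λ, (0:ℝ) < l)
    (Θ : Set ℝ) (hΘ : Θ = Set.image2 (· * ·) (↑Λ : Set ℝ) (ZProd X)) :
    ∀ θ ∈ Θ, ZProdStar X ⊆ RSet Θ θ ∧ RSet Θ θ ⊆ QProdStar X := by
  subst hΘ
  exact fun θ hθ =>
    ⟨ZProdStar_subset_RSet hX (fun _ ht _ hp => mul_mem_image2_mul_ZProd ht hp) hθ,
      RSet_subset_QProdStar (fun x hx => (hX x hx).1) (fun l hl => (hΛ l hl).ne') θ⟩
end

section
/- Let X ⊂ (0,1) and Λ, Γ ⊂ (0,∞) be finite sets with Γ nonempty having a positive minimum δ, and suppose Λ X^{Z_+} ⊆ (0, δ). Let Θ = Γ ∪ Λ X^{Z_+}. Then for every θ ∈ Θ with θ < min Γ, one has X ⊆ X^{Z_+*} ⊆ R_Θ(θ) ⊆ X^{Q_+*}. -/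
open Set

section Products

variable {X : Finset ℝ}

lemma mem_zProd_iff {y : ℝ} : y ∈ ZProd X ↔ ∃ m : ℝ → ℕ, y = ∏ a ∈ X, a ^ m a := by
  constructor
  · rintro (rfl | ⟨m, -, rfl⟩)
    · exact ⟨0, by simp⟩
    · exact ⟨m, rfl⟩
  · rintro ⟨m, rfl⟩
    by_cases hm : ∃ a ∈ X, m a ≠ 0
    · exact Or.inr ⟨m, hm, rfl⟩
    · push Not at hm
      exact Or.inl (Finset.prod_eq_one fun a ha => by rw [hm a ha, pow_zero])

lemma mem_zProdStar_of_mem_zProd_of_ne_one {y : ℝ} (hy : y ∈ ZProd X) (h1 : y ≠ 1) :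
    y ∈ ZProdStar X :=
  hy.resolve_left h1

lemma mul_mem_zProd {y z : ℝ} (hy : y ∈ ZProd X) (hz : z ∈ ZProd X) : y * z ∈ ZProd X := by
  obtain ⟨m, rfl⟩ := mem_zProd_iff.1 hy
  obtain ⟨m', rfl⟩ := mem_zProd_iff.1 hz
  exact mem_zProd_iff.2 ⟨m + m', by simp only [Pi.add_apply, pow_add, Finset.prod_mul_distrib]⟩

lemma pow_mem_zProd {y : ℝ} (hy : y ∈ ZProd X) (k : ℕ) : y ^ k ∈ ZProd X := by
  induction k with
  | zero => exact Or.inl (pow_zero y)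
  | succ k ih => exact pow_succ y k ▸ mul_mem_zProd ih hy

lemma coe_subset_zProdStar : (X : Set ℝ) ⊆ ZProdStar X := by
  classical
  intro x hx
  refine ⟨Pi.single x 1, ⟨x, hx, by simp⟩, ?_⟩
  rw [Finset.prod_eq_single x (fun b _ hb => by simp [hb]) (absurd hx)]
  simp

lemma zProdStar_subset_Ioo (hX : ∀ x ∈ X, x ∈ Ioo (0 : ℝ) 1) : ZProdStar X ⊆ Ioo 0 1 := by
  rintro _ ⟨m, ⟨b, hb, hmb⟩, rfl⟩
  refine ⟨Finset.prod_pos fun a ha => pow_pos (hX a ha).1 _, ?_⟩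
  rw [← Finset.prod_erase_mul _ _ hb]
  refine mul_lt_one_of_nonneg_of_lt_one_right ?_ (pow_nonneg (hX b hb).1.le _)
    (pow_lt_one₀ (hX b hb).1.le (hX b hb).2 hmb)
  exact Finset.prod_le_one (fun a ha => pow_nonneg (hX a (Finset.mem_of_mem_erase ha)).1.le _)
    fun a ha => pow_le_one₀ (hX a (Finset.mem_of_mem_erase ha)).1.le
      (hX a (Finset.mem_of_mem_erase ha)).2.le

lemma mem_qProdStar_of_pow_mem_zProdStar (hX : ∀ a ∈ X, 0 ≤ a) {r : ℝ} (hr : 0 ≤ r) {n : ℕ}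
    (hn : n ≠ 0) (hrn : r ^ n ∈ ZProdStar X) : r ∈ QProdStar X := by
  obtain ⟨m, ⟨b, hb, hmb⟩, hm⟩ := hrn
  refine ⟨fun a => (m a : ℚ) / n, fun a _ => by positivity, ⟨b, hb, by simp [hmb, hn]⟩, ?_⟩
  calc r = (r ^ n) ^ (n⁻¹ : ℝ) := (Real.pow_rpow_inv_natCast hr hn).symm
    _ = ∏ a ∈ X, (a ^ m a) ^ (n⁻¹ : ℝ) := by
      rw [hm, Real.finsetProd_rpow _ _ fun a ha => pow_nonneg (hX a ha) _]
    _ = ∏ a ∈ X, a ^ (((m a : ℚ) / n : ℚ) : ℝ) := by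
      refine Finset.prod_congr rfl fun a ha => ?_
      rw [← Real.rpow_natCast, ← Real.rpow_mul (hX a ha)]
      push_cast
      rfl

end Products

section GeometricSequences

variable {X : Finset ℝ} {Λ Θ : Set ℝ}

lemma exists_lt_eq_mul_of_mem_image2_zProd (hΛ : Λ.Finite) {u : ℕ → ℝ}
    (hu : ∀ k, u k ∈ image2 (· * ·) Λ (ZProd X)) :
    ∃ i j, i < j ∧ ∃ z ∈ ZProd X, u j = u i * z := by
  choose l hl y hy hly using hu
  choose m hm using fun k => mem_zProd_iff.1 (hy k)
  have := hΛ.to_subtype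
  have hwqo : WellQuasiOrdered fun p q : Λ × (X → ℕ) => p.1 = q.1 ∧ p.2 ≤ q.2 :=
    (Finite.wellQuasiOrdered _).prod wellQuasiOrdered_le
  obtain ⟨i, j, hij, hlij, hmij⟩ := hwqo fun k => (⟨l k, hl k⟩, fun a => m k a)
  refine ⟨i, j, hij, ∏ a ∈ X, a ^ (m j a - m i a), mem_zProd_iff.2 ⟨_, rfl⟩, ?_⟩
  have hyij : y j = y i * ∏ a ∈ X, a ^ (m j a - m i a) := by
    rw [hm, hm, ← Finset.prod_mul_distrib]
    exact Finset.prod_congr rfl fun a ha => by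
      rw [← pow_add, Nat.add_sub_cancel' (hmij ⟨a, ha⟩)]
  replace hlij : l i = l j := congrArg Subtype.val hlij
  rw [← hly, ← hly, hyij, hlij, mul_assoc]

lemma zProdStar_subset_rSet (hX : ∀ x ∈ X, x ∈ Ioo (0 : ℝ) 1)
    (hΘ : image2 (· * ·) Λ (ZProd X) ⊆ Θ) {θ : ℝ} (hθ : θ ∈ image2 (· * ·) Λ (ZProd X)) :
    ZProdStar X ⊆ RSet Θ θ := by
  intro r hr
  obtain ⟨hr0, hr1⟩ := zProdStar_subset_Ioo hX hr
  refine ⟨hr0, hr1, θ, hΘ hθ, ⟨0, by simp⟩, fun k => hΘ ?_⟩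
  obtain ⟨c, hc, y, hy, rfl⟩ := hθ
  rw [mul_assoc]
  exact mem_image2_of_mem hc (mul_mem_zProd hy (pow_mem_zProd (Or.inr hr) k))

lemma rSet_subset_qProdStar (hX : ∀ a ∈ X, 0 ≤ a) (hΛ : Λ.Finite) {δ : ℝ} (hδ : 0 < δ)
    (hsmall : image2 (· * ·) Λ (ZProd X) ⊆ Ioo 0 δ)
    (hlow : ∀ t ∈ Θ, t < δ → t ∈ image2 (· * ·) Λ (ZProd X)) (θ : ℝ) :
    RSet Θ θ ⊆ QProdStar X := by
  rintro r ⟨hr0, hr1, θ', -, -, hgeom⟩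
  have htend : Filter.Tendsto (fun k => θ' * r ^ k) Filter.atTop (nhds 0) := by
    simpa using (tendsto_pow_atTop_nhds_zero_of_lt_one hr0.le hr1).const_mul θ'
  obtain ⟨K, hK⟩ := Filter.eventually_atTop.1 (htend.eventually_lt_const hδ)
  obtain ⟨i, j, hij, z, hz, hzij⟩ := exists_lt_eq_mul_of_mem_image2_zProd hΛ
    (u := fun k => θ' * r ^ (K + k)) fun k => hlow _ (hgeom _) (hK _ (Nat.le_add_right K k))
  have hn : j - i ≠ 0 := Nat.sub_ne_zero_of_lt hij
  have hrz : r ^ (j - i) = z := by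
    refine mul_left_cancel₀ (hsmall (hlow _ (hgeom _) (hK _ (Nat.le_add_right K i)))).1.ne' ?_
    rw [← hzij, mul_assoc, ← pow_add, add_assoc, Nat.add_sub_cancel' hij.le]
  refine mem_qProdStar_of_pow_mem_zProdStar hX hr0.le hn ?_
  exact mem_zProdStar_of_mem_zProd_of_ne_one (hrz ▸ hz) (pow_lt_one₀ hr0.le hr1 hn).ne

end GeometricSequences

theorem stmt6_general (X Λ Γ : Finset ℝ) (hX : ∀ x ∈ X, x ∈ Set.Ioo (0:ℝ) 1)
    (hΓne : Γ.Nonempty)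
    (hsmall : Set.image2 (· * ·) (↑Λ : Set ℝ) (ZProd X) ⊆ Set.Ioo 0 (Γ.min' hΓne))
    (Θ : Set ℝ) (hΘ : Θ = (↑Γ : Set ℝ) ∪ Set.image2 (· * ·) (↑Λ : Set ℝ) (ZProd X)) :
    ∀ θ ∈ Θ, θ < Γ.min' hΓne →
      (↑X : Set ℝ) ⊆ ZProdStar X ∧ ZProdStar X ⊆ RSet Θ θ ∧
        RSet Θ θ ⊆ QProdStar X := by
  intro θ hθ hθδ
  have hlow : ∀ t ∈ Θ, t < Γ.min' hΓne → t ∈ image2 (· * ·) (↑Λ : Set ℝ) (ZProd X) := by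
    rintro t ht htδ
    rw [hΘ] at ht
    exact ht.resolve_left fun htΓ => htδ.not_ge (Γ.min'_le t htΓ)
  have hθΛ := hlow θ hθ hθδ
  refine ⟨coe_subset_zProdStar, zProdStar_subset_rSet hX (hΘ ▸ subset_union_right) hθΛ, ?_⟩
  exact rSet_subset_qProdStar (fun a ha => (hX a ha).1.le) Λ.finite_toSet
    ((hsmall hθΛ).1.trans (hsmall hθΛ).2) hsmall hlow θ

theorem stmt6 (X Λ Γ : Finset ℝ) (hX : ∀ x ∈ X, x ∈ Set.Ioo (0:ℝ) 1)
    (hΛ : ∀ l ∈ Λ, (0:ℝ) < l) (hΓpos : ∀ g ∈ Γ, (0:ℝ) < g)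
    (hΓne : Γ.Nonempty)
    (hsmall : Set.image2 (· * ·) (↑Λ : Set ℝ) (ZProd X) ⊆ Set.Ioo 0 (Γ.min' hΓne))
    (Θ : Set ℝ) (hΘ : Θ = (↑Γ : Set ℝ) ∪ Set.image2 (· * ·) (↑Λ : Set ℝ) (ZProd X)) :
    ∀ θ ∈ Θ, θ < Γ.min' hΓne →
      (↑X : Set ℝ) ⊆ ZProdStar X ∧ ZProdStar X ⊆ RSet Θ θ ∧
        RSet Θ θ ⊆ QProdStar X :=
  stmt6_general X Λ Γ hX hΓne hsmall Θ hΘ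
end
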